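/- arXiv:1803.02420 — 3 statements merged into one kernel-verified Lean document; each statement's English description precedes it below -/
import Mathlib

section
/- For a finite group G and x ∈ E_G, the centralizer of x equals the union of the cyclic subgroups generated by the elements of E_G that commute with x: C_G(x) = ⋃_{y ∈ E_G ∩ C_G(x)} ⟨y⟩. -/
/-- Radical of a natural number: product of its distinct prime divisors. -/
def rad (n : ℕ) : ℕ := n.primeFactors.prod id

/-- The coprime graph of a group: vertices are group elements, distinct
elements adjacent iff their orders are coprime. -/
def coprimeGraph (G : Type*) [Group G] : SimpleGraph G where
  Adj x y := x ≠ y ∧ Nat.Coprime (orderOf x) (orderOf y)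
  symm := ⟨fun x y h => ⟨h.1.symm, h.2.symm⟩⟩
  loopless := ⟨fun x h => h.1 rfl⟩

noncomputable instance (G : Type*) [Group G] [DecidableEq G] :
    DecidableRel (coprimeGraph G).Adj :=
  fun x y => inferInstanceAs (Decidable (x ≠ y ∧ Nat.Coprime (orderOf x) (orderOf y)))

/-- The set of non-identity end vertices of the coprime graph of `G`. -/
noncomputable def endVerts (G : Type*) [Group G] [Fintype G] [DecidableEq G] : Finset G :=
  Finset.univ.filter (fun x => x ≠ 1 ∧ rad (orderOf x) = rad (Fintype.card G))

lemma primeFactors_rad (n : ℕ) : (rad n).primeFactors = n.primeFactors := by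
  rw [rad]
  simpa using Nat.primeFactors_prod (s := n.primeFactors)
    (fun p hp => Nat.prime_of_mem_primeFactors hp)

lemma exists_coprime_part (m n : ℕ) (hm : m ≠ 0) :
    ∃ a, a ∣ m ∧ Nat.Coprime a n ∧ ∀ p : ℕ, p.Prime → p ∣ m → p ∣ n ∨ p ∣ a := by
  refine ⟨∏ p ∈ m.primeFactors.filter (fun p => ¬ p ∣ n), p ^ m.factorization p, ?_, ?_, ?_⟩
  · calc (∏ p ∈ m.primeFactors.filter (fun p => ¬ p ∣ n), p ^ m.factorization p)
        ∣ ∏ p ∈ m.primeFactors, p ^ m.factorization p :=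
          Finset.prod_dvd_prod_of_subset _ _ _ (Finset.filter_subset _ _)
    _ = m := by
          conv_rhs => rw [← Nat.factorization_prod_pow_eq_self hm]
          rfl
  · refine Nat.Coprime.prod_left fun p hp => ?_
    simp only [Finset.mem_filter] at hp
    exact Nat.Coprime.pow_left _
      (((Nat.prime_of_mem_primeFactors hp.1).coprime_iff_not_dvd).mpr hp.2)
  · intro p pp hpm
    by_cases h : p ∣ n
    · exact Or.inl h
    · refine Or.inr (dvd_trans (dvd_pow_self p ?_) (Finset.dvd_prod_of_mem _ ?_))
      · exact Nat.Prime.factorization_pos_of_dvd pp hm hpm |>.ne'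
      · simp [Nat.mem_primeFactors, pp, hpm, hm, h]

theorem stmt6 (G : Type*) [Group G] [Fintype G] [DecidableEq G]
    (x : G) (hx : x ∈ endVerts G) :
    (Subgroup.centralizer {x} : Set G) =
      ⋃ y ∈ {y : G | y ∈ endVerts G ∧ y ∈ Subgroup.centralizer {x}},
        (Subgroup.zpowers y : Set G) := by
  obtain ⟨-, hx1, hxr⟩ := Finset.mem_filter.mp hx
  ext g
  simp only [Set.mem_iUnion, Set.mem_setOf_eq, SetLike.mem_coe]
  constructor
  · intro hg
    have hgx : Commute g x := Subgroup.mem_centralizer_singleton_iff.mp hg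
    set m := orderOf x with hmdef
    set n := orderOf g with hndef
    have hm0 : m ≠ 0 := (orderOf_pos x).ne'
    have hn0 : n ≠ 0 := (orderOf_pos g).ne'
    obtain ⟨a, ham, han, hprimes⟩ := exists_coprime_part m n hm0
    have ha0 : a ≠ 0 := fun h0 => hm0 (Nat.eq_zero_of_zero_dvd (h0 ▸ ham))
    set z := x ^ (m / a) with hzdef
    have hz : orderOf z = a := by
      rw [hzdef, orderOf_pow' x (Nat.div_pos (Nat.le_of_dvd (Nat.pos_of_ne_zero hm0) ham)
        (Nat.pos_of_ne_zero ha0)).ne', ← hmdef,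
        Nat.gcd_eq_right (Nat.div_dvd_of_dvd ham), Nat.div_div_self ham hm0]
    have hcz : Commute g z := hgx.pow_right _
    have hczx : Commute z x := (Commute.refl x).pow_left _
    set y := g * z with hydef
    have hcoy : Nat.Coprime (orderOf g) (orderOf z) := by rw [hz]; exact han.symm
    have hoy : orderOf y = n * a := by
      rw [hydef, hcz.orderOf_mul_eq_mul_orderOf_of_coprime hcoy, hz]
    have hyc : y ∈ Subgroup.centralizer ({x} : Set G) :=
      Subgroup.mem_centralizer_singleton_iff.mpr (hgx.symm.mul_right hczx.symm).symm
    -- prime factors of orderOf y equal those of m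
    have hmG : m.primeFactors = (Fintype.card G).primeFactors := by
      have := congrArg Nat.primeFactors hxr
      rwa [primeFactors_rad, primeFactors_rad] at this
    have hpf : (orderOf y).primeFactors = m.primeFactors := by
      rw [hoy, Nat.primeFactors_mul hn0 ha0]
      apply Finset.Subset.antisymm
      · apply Finset.union_subset
        · rw [hmG]; exact Nat.primeFactors_mono orderOf_dvd_card Fintype.card_ne_zero
        · exact Nat.primeFactors_mono ham hm0
      · intro p hp
        rw [Nat.mem_primeFactors] at hp
        rcases hprimes p hp.1 hp.2.1 with h | h
        · exact Finset.mem_union_left _ (Nat.mem_primeFactors.mpr ⟨hp.1, h, hn0⟩)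
        · exact Finset.mem_union_right _ (Nat.mem_primeFactors.mpr ⟨hp.1, h, ha0⟩)
    have hy1 : y ≠ 1 := by
      intro h1
      apply hx1
      rw [← orderOf_eq_one_iff, ← hmdef]
      have : m.primeFactors = ∅ := by
        rw [← hpf, h1]; simp
      rcases (Nat.primeFactors_eq_empty).mp this with h | h
      · exact absurd h hm0
      · exact h
    have hyE : y ∈ endVerts G := by
      refine Finset.mem_filter.mpr ⟨Finset.mem_univ _, hy1, ?_⟩
      rw [← hxr, rad, rad, hpf]
    -- g is a power of y
    obtain ⟨k, hk1, hk2⟩ := Nat.chineseRemainder hcoy 1 0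
    have hyk : y ^ k = g := by
      rw [hydef, hcz.mul_pow]
      have hgk : g ^ k = g := by
        conv_rhs => rw [← pow_one g]
        exact pow_eq_pow_iff_modEq.mpr hk1
      have hzk : z ^ k = 1 := by
        exact orderOf_dvd_iff_pow_eq_one.mp (Nat.modEq_zero_iff_dvd.mp hk2)
      rw [hgk, hzk, mul_one]
    exact ⟨y, ⟨hyE, hyc⟩, ⟨(k : ℤ), by simpa using hyk⟩⟩
  · rintro ⟨y, ⟨-, hyc⟩, hgy⟩
    exact Subgroup.zpowers_le.mpr hyc hgy
end

section
/- For a finite group G, |E_G| = 1 if and only if G ≅ Z/2Z. -/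
lemma rad_two : rad 2 = 2 := by
  rw [rad, Nat.Prime.primeFactors Nat.prime_two]; simp

lemma rad_eq_two_of {n : ℕ} (hn : 2 ≤ n) (h : ∀ p : ℕ, p.Prime → p ∣ n → p = 2) :
    rad n = 2 := by
  have hfac : n.primeFactors = {2} := by
    apply Finset.eq_singleton_iff_nonempty_unique_mem.2
    constructor
    · exact (Nat.nonempty_primeFactors).2 hn
    · intro p hp
      rw [Nat.mem_primeFactors] at hp
      exact h p hp.1 hp.2.1
  simp [rad, hfac]

theorem stmt9 (G : Type*) [Group G] [Fintype G] [DecidableEq G] :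
    (endVerts G).card = 1 ↔ Nonempty (G ≃* Multiplicative (ZMod 2)) := by
  constructor
  · intro h
    obtain ⟨x, hx⟩ := Finset.card_eq_one.mp h
    have hmem : ∀ y : G, y ∈ endVerts G ↔ y = x := by
      intro y; rw [hx]; simp
    have hxmem : x ∈ endVerts G := by rw [hx]; simp
    rw [endVerts, Finset.mem_filter] at hxmem
    have hx1 : x ≠ 1 := hxmem.2.1
    -- x⁻¹ is also an end vertex
    have hinv : x⁻¹ = x := by
      rw [← hmem x⁻¹, endVerts, Finset.mem_filter]
      refine ⟨Finset.mem_univ _, inv_ne_one.2 hx1, ?_⟩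
      rw [orderOf_inv]; exact hxmem.2.2
    haveI : Fact (Nat.Prime 2) := ⟨Nat.prime_two⟩
    have hord : orderOf x = 2 := by
      apply orderOf_eq_prime
      · have : x * x = 1 := by nth_rewrite 1 [← hinv]; exact inv_mul_cancel x
        rw [pow_two]; exact this
      · exact hx1
    have hrad : rad (Fintype.card G) = 2 := by
      rw [← hxmem.2.2, hord, rad_two]
    -- every prime dividing card G is 2
    have hp2 : ∀ p : ℕ, p.Prime → p ∣ Fintype.card G → p = 2 := by
      intro p hp hpd
      have hmemp : p ∈ (Fintype.card G).primeFactors :=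
        Nat.mem_primeFactors.2 ⟨hp, hpd, Fintype.card_ne_zero⟩
      have : p ∣ rad (Fintype.card G) := by
        simpa [rad] using Finset.dvd_prod_of_mem id hmemp
      rw [hrad] at this
      exact (Nat.prime_dvd_prime_iff_eq hp Nat.prime_two).1 this
    -- every non-identity element is an end vertex
    have hall : ∀ y : G, y ≠ 1 → y = x := by
      intro y hy
      rw [← hmem y, endVerts, Finset.mem_filter]
      refine ⟨Finset.mem_univ _, hy, ?_⟩
      rw [hrad]
      apply rad_eq_two_of
      · have h0 : orderOf y ≠ 0 := (orderOf_pos y).ne'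
        have h1 : orderOf y ≠ 1 := fun hc => hy (orderOf_eq_one_iff.1 hc)
        omega
      · intro p hp hpd
        exact hp2 p hp (hpd.trans (orderOf_dvd_card))
    -- hence card G = 2
    have hcard : Fintype.card G = 2 := by
      have huniv : (Finset.univ : Finset G) = {1, x} := by
        apply Finset.eq_of_subset_of_card_le
        · intro y _
          rcases eq_or_ne y 1 with h | h
          · simp [h]
          · simp [hall y h]
        · calc ({1, x} : Finset G).card ≤ 2 := Finset.card_insert_le _ _ |>.trans (by simp)
            _ ≤ Fintype.card G := Fintype.one_lt_card_iff_nontrivial.2 ⟨⟨x, 1, hx1⟩⟩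
            _ = Finset.univ.card := (Finset.card_univ).symm
      rw [← Finset.card_univ, huniv]
      rw [Finset.card_insert_of_notMem (by simp [hx1.symm]), Finset.card_singleton]
    exact ⟨mulEquivOfPrimeCardEq (by simpa [Nat.card_eq_fintype_card] using hcard)
      (by simp [Nat.card_eq_fintype_card])⟩
  · rintro ⟨e⟩
    have hcard : Fintype.card G = 2 := by
      rw [← Nat.card_eq_fintype_card, Nat.card_congr e.toEquiv]
      simp [Nat.card_eq_fintype_card]
    have : (endVerts G) = {e.symm (Multiplicative.ofAdd 1)} := by
      apply Finset.eq_singleton_iff_unique_mem.2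
      have hne : e.symm (Multiplicative.ofAdd 1) ≠ 1 := by
        intro hcon
        have := e.symm.injective (hcon.trans (e.symm.map_one).symm)
        exact absurd this (by decide)
      have hord2 : ∀ y : G, y ≠ 1 → orderOf y = 2 := by
        intro y hy
        have : orderOf y ∣ 2 := hcard ▸ orderOf_dvd_card
        rcases (Nat.dvd_prime Nat.prime_two).1 this with h | h
        · exact absurd (orderOf_eq_one_iff.1 h) hy
        · exact h
      constructor
      · rw [endVerts, Finset.mem_filter]
        exact ⟨Finset.mem_univ _, hne, by rw [hord2 _ hne, hcard]⟩
      · intro y hy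
        rw [endVerts, Finset.mem_filter] at hy
        have hy1 := hy.2.1
        -- both y and e.symm 1 are the unique non-identity element
        have : ∀ z : G, z ≠ 1 → z = e.symm (Multiplicative.ofAdd 1) := by
          intro z hz
          have : e z ≠ 1 := fun hc => hz (by simpa using congrArg e.symm hc)
          have : e z = Multiplicative.ofAdd 1 := by
            rcases (by decide : ∀ w : Multiplicative (ZMod 2),
              w = 1 ∨ w = Multiplicative.ofAdd 1) (e z) with h | h
            · exact absurd h this
            · exact h
          simpa using congrArg e.symm this
        exact this y hy1
    rw [this, Finset.card_singleton]
end

section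
/- For a finite group G, |E_G| = 7 if and only if |G| = 8. -/
lemma rad_prime_pow {p k : ℕ} (hp : p.Prime) (hk : k ≠ 0) : rad (p ^ k) = p := by
  unfold rad
  rw [Nat.primeFactors_prime_pow hk hp]
  simp

/-- If `|G|` is a power of 2, then `endVerts G` is everything but the identity. -/
lemma endVerts_of_two_pow {G : Type*} [Group G] [Fintype G] [DecidableEq G] {k : ℕ}
    (hk : Fintype.card G = 2 ^ k) : (endVerts G).card = Fintype.card G - 1 := by
  rcases Nat.eq_zero_or_pos k with rfl | hkpos
  · have hsub : Fintype.card G = 1 := by simpa using hk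
    obtain ⟨y, hy⟩ := Fintype.card_eq_one_iff.mp hsub
    have : endVerts G = ∅ := by
      ext x
      simp only [endVerts, Finset.mem_filter, Finset.mem_univ, true_and,
        Finset.notMem_empty, iff_false, not_and]
      intro hx
      exact absurd ((hy x).trans (hy 1).symm) hx
    simp [this, hsub]
  · have herase : endVerts G = Finset.univ.erase 1 := by
      ext x
      simp only [endVerts, Finset.mem_filter, Finset.mem_erase, Finset.mem_univ,
        true_and, and_true]
      constructor
      · exact fun h => h.1
      · intro hx
        refine ⟨hx, ?_⟩
        have hdvd : orderOf x ∣ 2 ^ k := hk ▸ orderOf_dvd_card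
        obtain ⟨m, hm, hxm⟩ := (Nat.dvd_prime_pow Nat.prime_two).mp hdvd
        have hm0 : m ≠ 0 := by
          rintro rfl
          exact hx (orderOf_eq_one_iff.mp (by simpa using hxm))
        rw [hxm, rad_prime_pow Nat.prime_two hm0, hk,
          rad_prime_pow Nat.prime_two hkpos.ne']
    rw [herase, Finset.card_erase_of_mem (Finset.mem_univ 1), Finset.card_univ]

theorem stmt11 (G : Type*) [Group G] [Fintype G] [DecidableEq G] :
    (endVerts G).card = 7 ↔ Fintype.card G = 8 := by
  haveI : Fact (Nat.Prime 2) := ⟨Nat.prime_two⟩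
  constructor
  · intro h
    have hcl : ∀ a ∈ endVerts G, a⁻¹ ∈ endVerts G := by
      intro a ha
      simp only [endVerts, Finset.mem_filter, Finset.mem_univ, true_and] at ha ⊢
      simpa [orderOf_inv, inv_eq_one] using ha
    by_cases hfix : ∃ x ∈ endVerts G, x⁻¹ = x
    · obtain ⟨x, hx, hxi⟩ := hfix
      simp only [endVerts, Finset.mem_filter, Finset.mem_univ, true_and] at hx
      have hsq : x ^ 2 = 1 := by
        rw [sq]
        nth_rewrite 2 [← hxi]
        exact mul_inv_cancel x
      have hord : orderOf x = 2 := orderOf_eq_prime hsq hx.1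
      have hrad : rad (Fintype.card G) = 2 := by
        rw [← hx.2, hord, show (2 : ℕ) = 2 ^ 1 from rfl]
        exact rad_prime_pow Nat.prime_two one_ne_zero
      have hpos : Fintype.card G ≠ 0 := Fintype.card_ne_zero
      have huniq : ∀ {d : ℕ}, d.Prime → d ∣ Fintype.card G → d = 2 := by
        intro d hd hdvd
        have hmem : d ∈ (Fintype.card G).primeFactors :=
          Nat.mem_primeFactors.mpr ⟨hd, hdvd, hpos⟩
        have hdr : d ∣ rad (Fintype.card G) := Finset.dvd_prod_of_mem id hmem
        rw [hrad] at hdr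
        exact (Nat.prime_dvd_prime_iff_eq hd Nat.prime_two).mp hdr
      have hpow := Nat.eq_prime_pow_of_unique_prime_dvd hpos huniq
      have hev := endVerts_of_two_pow hpow
      rw [h] at hev
      have hcard : 0 < Fintype.card G := Fintype.card_pos
      omega
    · push_neg at hfix
      exfalso
      have hsum : ((endVerts G).card : ZMod 2) = 0 := by
        rw [Finset.card_eq_sum_ones, Nat.cast_sum]
        push_cast
        have h11 : (1 : ZMod 2) + 1 = 0 := by rfl
        exact Finset.sum_involution (f := fun _ : G => (1 : ZMod 2)) (fun a _ => a⁻¹)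
          (fun a ha => h11)
          (fun a ha _ => hfix a ha) (fun a ha => hcl a ha) (fun a ha => inv_inv a)
      have hdvd := (ZMod.natCast_eq_zero_iff _ 2).mp hsum
      rw [h] at hdvd
      omega
  · intro h
    have hev := endVerts_of_two_pow (G := G) (k := 3) (by norm_num [h])
    omega
end
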